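/- arXiv:2210.03091 — 6 statements merged into one kernel-verified Lean document; each statement's English description precedes it below -/
import Mathlib

section
/- Let d ≥ 1, let q > 2 (with q < 2d/(d−2) if d ≥ 3), set θ = d(q−2)/(2q) ∈ (0,1), and let p be defined by 1/p + 2/q = 1. Suppose C > 0 is a constant such that the scaled Gagliardo–Nirenberg–Sobolev inequality holds: for every λ > 0 and every u ∈ C_c^∞(ℝ^d, ℂ), ∫_{ℝ^d} |∇u|² dx + λ ∫_{ℝ^d} |u|² dx ≥ C λ^{1−θ} (∫_{ℝ^d} |u|^q dx)^{2/q}. Then for every nonnegative V ∈重 L^p(ℝ^d) and every u ∈ C_c^∞(ℝ^d, ℂ), ∫_{ℝ^d} |∇u|² dx − ∫_{ℝ^d} V |u|² dx ≥ −(C^{−1} ‖V‖_p)^{1/(1−θ)} ∫_{ℝ^d} |u|² dx. -/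
open MeasureTheory

/-- **Keller–Lieb–Thirring estimate for the Schrödinger operator from the
scaled Gagliardo–Nirenberg–Sobolev inequality.** -/
theorem keller_lieb_thirring_from_GNS
    (d : ℕ) (hd : 1 ≤ d) (q p θ C : ℝ)
    (hq : 2 < q)
    (hq' : 3 ≤ d → q < 2 * d / (d - 2))
    (hθ : θ = d * (q - 2) / (2 * q))
    (hp : 1 / p + 2 / q = 1)
    (hC : 0 < C)
    (hGNS : ∀ lam : ℝ, 0 < lam →
      ∀ u : EuclideanSpace ℝ (Fin d) → ℂ, ContDiff ℝ (⊤ : ℕ∞) u → HasCompactSupport u →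
        (∫ x, ‖fderiv ℝ u x‖ ^ 2) + lam * (∫ x, ‖u x‖ ^ 2)
          ≥ C * lam ^ (1 - θ) * (∫ x, ‖u x‖ ^ q) ^ (2 / q)) :
    ∀ V : EuclideanSpace ℝ (Fin d) → ℝ,
      (∀ x, 0 ≤ V x) → MemLp V (ENNReal.ofReal p) volume →
      ∀ u : EuclideanSpace ℝ (Fin d) → ℂ, ContDiff ℝ (⊤ : ℕ∞) u → HasCompactSupport u →
        (∫ x, ‖fderiv ℝ u x‖ ^ 2) - (∫ x, V x * ‖u x‖ ^ 2)
          ≥ - (C⁻¹ * (∫ x, V x ^ p) ^ (1 / p)) ^ (1 / (1 - θ)) * (∫ x, ‖u x‖ ^ 2) := by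
  intro V hV hVp u hu hsupp
  have hq0 : (0:ℝ) < q := by linarith
  have h2q : 2 / q < 1 := (div_lt_one hq0).mpr hq
  have h2q0 : 0 < 2 / q := by positivity
  have hp0 : 0 < p := one_div_pos.mp (by linarith)
  have hp1 : 1 < p := (div_lt_one hp0).mp (by linarith)
  have hd1 : (1:ℝ) ≤ d := by exact_mod_cast hd
  have hθ1 : θ < 1 := by
    rw [hθ, div_lt_one (by positivity)]
    by_cases hd3 : 3 ≤ d
    · have hqd := hq' hd3
      have hd3' : (3:ℝ) ≤ d := by exact_mod_cast hd3
      have hd2 : (0:ℝ) < (d:ℝ) - 2 := by linarith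
      rw [lt_div_iff₀ hd2] at hqd
      nlinarith
    · have : d ≤ 2 := by omega
      have hd2 : (d:ℝ) ≤ 2 := by exact_mod_cast this
      nlinarith
  have h1θ : 0 < 1 - θ := by linarith
  -- Hölder's inequality
  have hconj : Real.HolderConjugate p (q / 2) := ⟨by rw [inv_div, inv_one, ← one_div]; linarith, hp0, by linarith⟩
  have hgcont : Continuous fun x => ‖u x‖ ^ 2 := (hu.continuous.norm.pow 2)
  have hgsupp : HasCompactSupport fun x => ‖u x‖ ^ 2 := by
    have : (fun x => ‖u x‖ ^ 2) = (fun t : ℂ => ‖t‖ ^ 2) ∘ u := rfl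
    rw [this]
    exact hsupp.comp_left (by simp)
  have hg : MemLp (fun x => ‖u x‖ ^ 2) (ENNReal.ofReal (q / 2)) volume :=
    hgcont.memLp_of_hasCompactSupport hgsupp
  have holder := integral_mul_le_Lp_mul_Lq_of_nonneg hconj
    (Filter.Eventually.of_forall hV)
    (Filter.Eventually.of_forall fun x => by positivity) hVp hg
  have hpow : ∀ x : EuclideanSpace ℝ (Fin d), ((‖u x‖ ^ 2 : ℝ)) ^ (q / 2) = ‖u x‖ ^ q := by
    intro x
    rw [← Real.rpow_natCast (‖u x‖) 2, ← Real.rpow_mul (norm_nonneg _),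
      show ((2:ℕ):ℝ) * (q / 2) = q by push_cast; ring]
  simp_rw [hpow, one_div_div] at holder
  set A := (∫ x, V x ^ p) ^ (1 / p) with hA
  have hA0 : 0 ≤ A :=
    Real.rpow_nonneg (integral_nonneg fun x => Real.rpow_nonneg (hV x) p) _
  have hL : 0 ≤ ∫ x, ‖fderiv ℝ u x‖ ^ 2 := integral_nonneg fun x => by positivity
  have hB : 0 ≤ (∫ x, ‖u x‖ ^ q) ^ (2 / q) :=
    Real.rpow_nonneg (integral_nonneg fun x => Real.rpow_nonneg (norm_nonneg _) q) _
  rcases hA0.eq_or_lt with h0 | hApos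
  · rw [← h0, mul_zero, Real.zero_rpow (one_div_pos.mpr h1θ).ne', neg_zero, zero_mul]
    have : ∫ x, V x * ‖u x‖ ^ 2 ≤ 0 := by
      calc ∫ x, V x * ‖u x‖ ^ 2 ≤ A * (∫ x, ‖u x‖ ^ q) ^ (2 / q) := holder
        _ = 0 := by rw [← h0, zero_mul]
    linarith
  · set lam := (C⁻¹ * A) ^ (1 / (1 - θ)) with hlam
    have hlampos : 0 < lam := Real.rpow_pos_of_pos (by positivity) _
    have key := hGNS lam hlampos u hu hsupp
    have hClam : C * lam ^ (1 - θ) = A := by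
      rw [hlam, ← Real.rpow_mul (by positivity), one_div,
        inv_mul_cancel₀ h1θ.ne', Real.rpow_one]
      field_simp
    rw [hClam] at key
    linarith
end

section
/- Let d ≥ 1, N ≥ 1, q ∈ (1,2), q' = q/(q−1), r = q'/2, and let K : ℝ^d → M_N(ℂ) be measurable with K(x) = K(−x)* a.e. and K ∈ L^r(ℝ^d, M_N(ℂ)). For s > 0 define J(s) := sup { E(w) : w ∈ L^q(ℝ^d, ℂ^N), ∫_{ℝ^d} |w|^q dx = s }. Then J(s) = s^{2/q} J(1) for all s > 0, and if J(1) > 0 then the strong binding inequality holds: J(s + s') > J(s) + J(s') for all s, s' > 0. -/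
open MeasureTheory Matrix

/-- The squared Euclidean norm `|v|²_{ℂ^N}` of a vector `v ∈ ℂ^N`. -/
noncomputable def vecNormSq {N : ℕ} (v : Fin N → ℂ) : ℝ := ∑ i, ‖v i‖ ^ 2

/-- The bilinear energy `E(w₁, w₂) = ∬ ⟨w₁(x), K(x−y) w₂(y)⟩_{ℂ^N} dx dy`. -/
noncomputable def diracEnergy {d N : ℕ}
    (K : EuclideanSpace ℝ (Fin d) → Matrix (Fin N) (Fin N) ℂ)
    (w₁ w₂ : EuclideanSpace ℝ (Fin d) → Fin N → ℂ) : ℂ :=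
  ∫ x, ∫ y, dotProduct (star (w₁ x)) ((K (x - y)) *ᵥ (w₂ y))

/-- `J(s) = sup { E(w) : w ∈ L^q(ℝ^d, ℂ^N), ∫ |w|^q = s }`. -/
noncomputable def diracJ (d N : ℕ) (q : ℝ)
    (K : EuclideanSpace ℝ (Fin d) → Matrix (Fin N) (Fin N) ℂ) (s : ℝ) : ℝ :=
  sSup {a : ℝ | ∃ w : EuclideanSpace ℝ (Fin d) → Fin N → ℂ,
    MemLp w (ENNReal.ofReal q) volume ∧
    (∫ x, vecNormSq (w x) ^ (q / 2)) = s ∧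
    a = (diracEnergy K w w).re}

open Pointwise

/-!
Replacing `w` by `c • w` with `c > 0` multiplies the constraint `∫ |w|^q` by `c^q` and the
energy by `c^2`, so the admissible energies at level `s` are `s^{2/q}` times those at level `1`
(`sSup` of a nonnegative multiple of a set of reals is that multiple of its `sSup`, junk values
included). Strong binding then reduces to the strict superadditivity of `s ↦ s^{2/q}`, as
`2/q > 1`.
-/

theorem Real.add_rpow_lt_rpow_add_of_one_lt {a b p : ℝ} (ha : 0 < a) (hb : 0 < b)
    (hp : 1 < p) : a ^ p + b ^ p < (a + b) ^ p := by
  have hab : 0 < a + b := add_pos ha hb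
  have split : ∀ {x : ℝ}, 0 < x → x ^ p = x * x ^ (p - 1) := fun hx => by
    rw [← Real.rpow_one_add' hx.le (by linarith), add_sub_cancel]
  have ha' : a ^ (p - 1) < (a + b) ^ (p - 1) :=
    Real.rpow_lt_rpow ha.le (by linarith) (by linarith)
  have hb' : b ^ (p - 1) < (a + b) ^ (p - 1) :=
    Real.rpow_lt_rpow hb.le (by linarith) (by linarith)
  rw [split ha, split hb, split hab, add_mul]
  exact add_lt_add (mul_lt_mul_of_pos_left ha' ha) (mul_lt_mul_of_pos_left hb' hb)

theorem vecNormSq_nonneg {N : ℕ} (v : Fin N → ℂ) : 0 ≤ vecNormSq v :=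
  Finset.sum_nonneg fun _ _ => sq_nonneg _

theorem vecNormSq_smul {N : ℕ} (c : ℂ) (v : Fin N → ℂ) :
    vecNormSq (c • v) = ‖c‖ ^ 2 * vecNormSq v := by
  simp only [vecNormSq, Pi.smul_apply, smul_eq_mul, norm_mul, mul_pow, Finset.mul_sum]

section Scaling

variable {d N : ℕ} (K : EuclideanSpace ℝ (Fin d) → Matrix (Fin N) (Fin N) ℂ)

theorem diracEnergy_smul (a b : ℂ) (w₁ w₂ : EuclideanSpace ℝ (Fin d) → Fin N → ℂ) :
    diracEnergy K (a • w₁) (b • w₂) = star a * b * diracEnergy K w₁ w₂ := by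
  have pointwise : ∀ x y, dotProduct (star ((a • w₁) x)) (K (x - y) *ᵥ (b • w₂) y)
      = star a * b * dotProduct (star (w₁ x)) (K (x - y) *ᵥ w₂ y) := fun x y => by
    simp only [Pi.smul_apply, star_smul, mulVec_smul, smul_dotProduct, dotProduct_smul,
      smul_eq_mul]
    ring
  simp only [diracEnergy, pointwise, integral_const_mul]

variable (q : ℝ)

def diracEnergies (s : ℝ) : Set ℝ :=
  {a : ℝ | ∃ w : EuclideanSpace ℝ (Fin d) → Fin N → ℂ,
    MemLp w (ENNReal.ofReal q) volume ∧
    (∫ x, vecNormSq (w x) ^ (q / 2)) = s ∧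
    a = (diracEnergy K w w).re}

theorem diracJ_eq_sSup_diracEnergies (s : ℝ) : diracJ d N q K s = sSup (diracEnergies K q s) :=
  rfl

variable {K q}

theorem mul_mem_diracEnergies {c t a : ℝ} (hc : 0 < c) (ha : a ∈ diracEnergies K q t) :
    c ^ 2 * a ∈ diracEnergies K q (c ^ q * t) := by
  obtain ⟨w, hw, hconstraint, rfl⟩ := ha
  refine ⟨(c : ℂ) • w, hw.const_smul (c : ℂ), ?_, ?_⟩
  · have pointwise : ∀ x, vecNormSq (((c : ℂ) • w) x) ^ (q / 2)
        = c ^ q * vecNormSq (w x) ^ (q / 2) := fun x => by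
      rw [Pi.smul_apply, vecNormSq_smul, Complex.norm_real, Real.norm_of_nonneg hc.le,
        Real.mul_rpow (sq_nonneg c) (vecNormSq_nonneg _), ← Real.rpow_natCast,
        ← Real.rpow_mul hc.le, Nat.cast_ofNat, mul_div_cancel₀ q two_ne_zero]
    simp only [pointwise, integral_const_mul, hconstraint]
  · rw [diracEnergy_smul, Complex.star_def, Complex.conj_ofReal, ← sq, ← Complex.ofReal_pow,
      Complex.re_ofReal_mul]

theorem diracEnergies_rpow_mul {c : ℝ} (hc : 0 < c) (t : ℝ) :
    diracEnergies K q (c ^ q * t) = c ^ 2 • diracEnergies K q t := by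
  ext a
  constructor
  · intro ha
    have hinv := mul_mem_diracEnergies (inv_pos.mpr hc) ha
    rw [Real.inv_rpow hc.le, inv_mul_cancel_left₀ (Real.rpow_pos_of_pos hc q).ne'] at hinv
    refine Set.mem_smul_set.mpr ⟨_, hinv, ?_⟩
    rw [smul_eq_mul, ← mul_assoc, ← mul_pow, mul_inv_cancel₀ hc.ne', one_pow, one_mul]
  · rintro ⟨b, hb, rfl⟩
    exact mul_mem_diracEnergies hc hb

theorem diracJ_rpow_mul {c : ℝ} (hc : 0 < c) (t : ℝ) :
    diracJ d N q K (c ^ q * t) = c ^ 2 * diracJ d N q K t := by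
  rw [diracJ_eq_sSup_diracEnergies, diracEnergies_rpow_mul hc,
    Real.sSup_smul_of_nonneg (sq_nonneg c), smul_eq_mul, diracJ_eq_sSup_diracEnergies]

theorem diracJ_eq_rpow_mul_diracJ_one (hq : q ≠ 0) {s : ℝ} (hs : 0 < s) :
    diracJ d N q K s = s ^ (2 / q) * diracJ d N q K 1 := by
  have hc : 0 < s ^ q⁻¹ := Real.rpow_pos_of_pos hs _
  have := diracJ_rpow_mul (K := K) (q := q) hc 1
  rwa [Real.rpow_inv_rpow hs.le hq, mul_one, ← Real.rpow_mul_natCast hs.le, Nat.cast_ofNat,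
    inv_mul_eq_div] at this

end Scaling

theorem diracJ_scaling_and_strong_binding_general
    (d N : ℕ)
    (q : ℝ) (hq1 : 1 < q) (hq2 : q < 2)
    (K : EuclideanSpace ℝ (Fin d) → Matrix (Fin N) (Fin N) ℂ) :
    (∀ s : ℝ, 0 < s → diracJ d N q K s = s ^ (2 / q) * diracJ d N q K 1) ∧
    (0 < diracJ d N q K 1 →
      ∀ s s' : ℝ, 0 < s → 0 < s' →
        diracJ d N q K (s + s') > diracJ d N q K s + diracJ d N q K s') := by
  have hq0 : 0 < q := one_pos.trans hq1
  have scaling : ∀ s : ℝ, 0 < s → diracJ d N q K s = s ^ (2 / q) * diracJ d N q K 1 :=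
    fun _ => diracJ_eq_rpow_mul_diracJ_one hq0.ne'
  refine ⟨scaling, fun hJ s s' hs hs' => ?_⟩
  have superadd : s ^ (2 / q) + s' ^ (2 / q) < (s + s') ^ (2 / q) :=
    Real.add_rpow_lt_rpow_add_of_one_lt hs hs' ((one_lt_div hq0).mpr hq2)
  rw [scaling s hs, scaling s' hs', scaling (s + s') (add_pos hs hs'), ← add_mul]
  exact mul_lt_mul_of_pos_right superadd hJ

/-- **Scaling law and strong binding inequality** for the maximization problem
`J(s)`: one has `J(s) = s^{2/q} J(1)`, and if `J(1) > 0` then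
`J(s + s') > J(s) + J(s')` for all `s, s' > 0`. -/
theorem diracJ_scaling_and_strong_binding
    (d N : ℕ) (hd : 1 ≤ d) (hN : 1 ≤ N)
    (q r : ℝ) (hq1 : 1 < q) (hq2 : q < 2) (hr : r = (q / (q - 1)) / 2)
    (K : EuclideanSpace ℝ (Fin d) → Matrix (Fin N) (Fin N) ℂ)
    (hKmeas : ∀ i j, Measurable fun x => K x i j)
    (hKsym : ∀ᵐ x : EuclideanSpace ℝ (Fin d), K (-x) = (K x)ᴴ)
    (hKr : ∀ i j, MemLp (fun x => K x i j) (ENNReal.ofReal r) volume) :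
    (∀ s : ℝ, 0 < s → diracJ d N q K s = s ^ (2 / q) * diracJ d N q K 1) ∧
    (0 < diracJ d N q K 1 →
      ∀ s s' : ℝ, 0 < s → 0 < s' →
        diracJ d N q K (s + s') > diracJ d N q K s + diracJ d N q K s') :=
  diracJ_scaling_and_strong_binding_general d N q hq1 hq2 K
end

section
/- Let m > 0, λ ∈ (−m, m) and p > 1. Set A := p(m² − λ²)/(p − 1), B := (2/(p − 1))√(m² − λ²), and define V : ℝ → ℝ by V(x) = A/(m cosh(Bx) + λ). Define φ(x) := √( V(x)^{p−1} ( m + λ + ((p−1)/p) V(x) ) / (2m) ) and χ(x) := sign(x) · √( V(x)^{p−1} ( m − λ − ((p−1)/p) V(x) ) / (2m) ). Then: (i) V is positive, even, and strictly decreasing on (0, ∞); (ii) φ² + χ² = V^{p−1} on ℝ; (iii) φ and χ are differentiable on ℝ and square integrable, and (φ, χ) solves the one-dimensional nonlinear Dirac system φ' = −(λ + m + (φ² + χ²)^{1/(p−1)}) χ, χ' = (λ − m + (φ² + χ²)^{1/(p−1)}) φ on ℝ. -/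
open MeasureTheory

/-- Integrability of `exp (-(a * |x|))` on the real line. -/
lemma integrable_exp_neg_abs_aux {a : ℝ} (ha : 0 < a) :
    Integrable (fun x : ℝ => Real.exp (-(a * |x|))) := by
  have hIoi : IntegrableOn (fun x : ℝ => Real.exp (-(a * |x|))) (Set.Ioi 0) := by
    refine (exp_neg_integrableOn_Ioi 0 ha).congr_fun (fun x hx => ?_) measurableSet_Ioi
    rw [abs_of_pos (Set.mem_Ioi.mp hx)]; ring_nf
  rw [← integrableOn_univ, ← @Set.Iio_union_Ici _ _ (0 : ℝ), integrableOn_union,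
    integrableOn_Ici_iff_integrableOn_Ioi]
  refine ⟨?_, hIoi⟩
  rw [← (Measure.measurePreserving_neg (volume : Measure ℝ)).integrableOn_comp_preimage
      (Homeomorph.neg ℝ).measurableEmbedding]
  simpa [Function.comp_def, abs_neg] using hIoi

set_option maxHeartbeats 4000000 in
/-- **The explicit optimal potential and spinor in the one-dimensional
subcritical regime.** For `m > 0`, `λ ∈ (−m, m)`, `p > 1`, the potential
`V(x) = A/(m cosh(Bx) + λ)` and the spinor components `φ, χ` defined from it
solve the one-dimensional nonlinear Dirac system. -/
theorem oneDim_explicit_solution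
    (m lam p : ℝ) (hm : 0 < m) (hlam₁ : -m < lam) (hlam₂ : lam < m) (hp : 1 < p)
    (A B : ℝ)
    (hA : A = p * (m ^ 2 - lam ^ 2) / (p - 1))
    (hB : B = 2 / (p - 1) * Real.sqrt (m ^ 2 - lam ^ 2))
    (V φ χ : ℝ → ℝ)
    (hV : ∀ x, V x = A / (m * Real.cosh (B * x) + lam))
    (hφ : ∀ x, φ x = Real.sqrt (V x ^ (p - 1) * (m + lam + (p - 1) / p * V x) / (2 * m)))
    (hχ : ∀ x, χ x = Real.sign x *
      Real.sqrt (V x ^ (p - 1) * (m - lam - (p - 1) / p * V x) / (2 * m))) :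
    -- (i) V is positive, even and strictly decreasing on (0, ∞)
    ((∀ x, 0 < V x) ∧ (∀ x, V (-x) = V x) ∧ StrictAntiOn V (Set.Ioi 0)) ∧
    -- (ii) φ² + χ² = V^{p−1}
    (∀ x, φ x ^ 2 + χ x ^ 2 = V x ^ (p - 1)) ∧
    -- (iii) φ, χ are differentiable, square integrable, and solve the system
    (Differentiable ℝ φ ∧ Differentiable ℝ χ ∧
      Integrable (fun x => φ x ^ 2) ∧ Integrable (fun x => χ x ^ 2) ∧
      (∀ x, deriv φ x = -(lam + m + (φ x ^ 2 + χ x ^ 2) ^ (1 / (p - 1))) * χ x) ∧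
      (∀ x, deriv χ x = (lam - m + (φ x ^ 2 + χ x ^ 2) ^ (1 / (p - 1))) * φ x)) := by
  have hp1 : (0:ℝ) < p - 1 := by linarith
  have hp0 : (0:ℝ) < p := by linarith
  have hml : (0:ℝ) < m + lam := by linarith
  have hml' : (0:ℝ) < m - lam := by linarith
  have hms : (0:ℝ) < m ^ 2 - lam ^ 2 := by nlinarith
  set s : ℝ := Real.sqrt (m ^ 2 - lam ^ 2) with hs_def
  have hs0 : 0 < s := Real.sqrt_pos.mpr hms
  have hs2 : s ^ 2 = m ^ 2 - lam ^ 2 := Real.sq_sqrt hms.le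
  have hA0 : 0 < A := by rw [hA]; positivity
  have hB0 : 0 < B := by rw [hB]; exact mul_pos (by positivity) hs0
  have hBq : B * (p - 1) = 2 * s := by rw [hB]; field_simp
  have hAq : A * (p - 1) = p * (m ^ 2 - lam ^ 2) := by rw [hA]; field_simp
  set D : ℝ → ℝ := fun x => m * Real.cosh (B * x) + lam with hD_def
  have hDpos : ∀ x, 0 < D x := fun x => by
    have h := Real.one_le_cosh (B * x); simp only [hD_def]; nlinarith
  have hVD : ∀ x, V x = A / D x := hV
  have hV0 : ∀ x, 0 < V x := fun x => hVD x ▸ div_pos hA0 (hDpos x)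
  have hcosh2 : ∀ x, Real.cosh (B * x) = 2 * Real.cosh (B * x / 2) ^ 2 - 1 := by
    intro x
    have h0 := congrArg Real.cosh (show B * x = 2 * (B * x / 2) by ring)
    rw [Real.cosh_two_mul] at h0
    have h2 := Real.cosh_sq (B * x / 2)
    linarith
  have hsinh2 : ∀ x, Real.sinh (B * x) =
      2 * Real.sinh (B * x / 2) * Real.cosh (B * x / 2) := by
    intro x
    have h0 := congrArg Real.sinh (show B * x = 2 * (B * x / 2) by ring)
    rw [Real.sinh_two_mul] at h0
    exact h0
  have hDval : ∀ x, D x = 2 * m * Real.cosh (B * x / 2) ^ 2 - m + lam := by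
    intro x; simp only [hD_def]; rw [hcosh2 x]; ring
  have hDval' : ∀ x, D x = 2 * m * Real.sinh (B * x / 2) ^ 2 + m + lam := by
    intro x
    have h2 := Real.cosh_sq (B * x / 2)
    rw [hDval x, h2]; ring
  set K : ℝ := A ^ ((p - 1) / 2) with hK_def
  have hK0 : 0 < K := Real.rpow_pos_of_pos hA0 _
  have hK2 : K ^ 2 = A ^ (p - 1) := by
    rw [hK_def, sq, ← Real.rpow_add hA0]; congr 1; ring
  set c₁ : ℝ := Real.sqrt (m + lam) * K with hc₁_def
  set c₂ : ℝ := Real.sqrt (m - lam) * K with hc₂_def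
  have hc₁0 : 0 < c₁ := mul_pos (Real.sqrt_pos.mpr hml) hK0
  have hc₂0 : 0 < c₂ := mul_pos (Real.sqrt_pos.mpr hml') hK0
  have hc₁sq : c₁ ^ 2 = (m + lam) * A ^ (p - 1) := by
    rw [hc₁_def, mul_pow, Real.sq_sqrt hml.le, hK2]
  have hc₂sq : c₂ ^ 2 = (m - lam) * A ^ (p - 1) := by
    rw [hc₂_def, mul_pow, Real.sq_sqrt hml'.le, hK2]
  have hsml : s = Real.sqrt (m + lam) * Real.sqrt (m - lam) := by
    rw [hs_def, show m ^ 2 - lam ^ 2 = (m + lam) * (m - lam) by ring,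
      Real.sqrt_mul hml.le]
  have hc₁s : c₁ * s = (m + lam) * c₂ := by
    rw [hc₁_def, hc₂_def, hsml,
      show Real.sqrt (m + lam) * K * (Real.sqrt (m + lam) * Real.sqrt (m - lam))
      = Real.sqrt (m + lam) * Real.sqrt (m + lam) * (Real.sqrt (m - lam) * K) by ring,
      Real.mul_self_sqrt hml.le]
  have hc₂s : c₂ * s = (m - lam) * c₁ := by
    rw [hc₁_def, hc₂_def, hsml,
      show Real.sqrt (m - lam) * K * (Real.sqrt (m + lam) * Real.sqrt (m - lam))
      = Real.sqrt (m - lam) * Real.sqrt (m - lam) * (Real.sqrt (m + lam) * K) by ring,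
      Real.mul_self_sqrt hml'.le]
  set E : ℝ → ℝ := fun x => D x ^ (-(p / 2)) with hE_def
  have hE0 : ∀ x, 0 < E x := fun x => Real.rpow_pos_of_pos (hDpos x) _
  have hE2 : ∀ x, E x ^ 2 = (D x ^ (p - 1) * D x)⁻¹ := by
    intro x
    simp only [hE_def]
    rw [sq, ← Real.rpow_add (hDpos x),
      show -(p / 2) + -(p / 2) = -((p - 1) + 1) by ring, Real.rpow_neg (hDpos x).le,
      Real.rpow_add (hDpos x), Real.rpow_one]
  have hVp : ∀ x, V x ^ (p - 1) = A ^ (p - 1) / D x ^ (p - 1) := fun x => by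
    rw [hVD x, Real.div_rpow hA0.le (hDpos x).le]
  have hDp0 : ∀ x, 0 < D x ^ (p - 1) := fun x => Real.rpow_pos_of_pos (hDpos x) _
  have hpA : (p - 1) / p * A = m ^ 2 - lam ^ 2 := by
    rw [hA]; field_simp
  have hfrac : ∀ x, (p - 1) / p * V x = (m ^ 2 - lam ^ 2) / D x := by
    intro x; rw [hVD x, ← hpA]; ring
  set F : ℝ → ℝ := fun x => c₁ * Real.cosh (B * x / 2) * E x with hF_def
  set G : ℝ → ℝ := fun x => c₂ * Real.sinh (B * x / 2) * E x with hG_def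
  have hF2 : ∀ x, F x ^ 2
      = (m + lam) * A ^ (p - 1) * Real.cosh (B * x / 2) ^ 2 * (D x ^ (p - 1) * D x)⁻¹ := by
    intro x
    simp only [hF_def]
    rw [mul_pow, mul_pow, hc₁sq, hE2 x]
  have hG2 : ∀ x, G x ^ 2
      = (m - lam) * A ^ (p - 1) * Real.sinh (B * x / 2) ^ 2 * (D x ^ (p - 1) * D x)⁻¹ := by
    intro x
    simp only [hG_def]
    rw [mul_pow, mul_pow, hc₂sq, hE2 x]
  -- the argument of the square root defining φ equals (F x)^2
  have harg₁ : ∀ x, V x ^ (p - 1) * (m + lam + (p - 1) / p * V x) / (2 * m) = F x ^ 2 := by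
    intro x
    rw [hfrac x, hVp x, hF2 x]
    have h1 := (hDpos x).ne'
    have h2 := (hDp0 x).ne'
    clear_value D E F G
    field_simp
    linear_combination (m + lam) * hDval x
  have harg₂ : ∀ x, V x ^ (p - 1) * (m - lam - (p - 1) / p * V x) / (2 * m) = G x ^ 2 := by
    intro x
    rw [hfrac x, hVp x, hG2 x]
    have h1 := (hDpos x).ne'
    have h2 := (hDp0 x).ne'
    clear_value D E F G
    field_simp
    linear_combination (m - lam) * hDval' x
  have hφF : ∀ x, φ x = F x := fun x => by
    rw [hφ x, harg₁ x, Real.sqrt_sq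
      (mul_nonneg (mul_nonneg hc₁0.le (Real.cosh_pos _).le) (hE0 x).le)]
  have hχG : ∀ x, χ x = G x := by
    intro x
    rw [hχ x, harg₂ x, Real.sqrt_sq_eq_abs]
    rcases lt_trichotomy x 0 with hx | hx | hx
    · rw [Real.sign_of_neg hx]
      have hsh : Real.sinh (B * x / 2) < 0 := by
        rw [show (0:ℝ) = Real.sinh 0 by simp]
        exact Real.sinh_lt_sinh.mpr (by nlinarith)
      have hGle : G x ≤ 0 := by
        simp only [hG_def]
        nlinarith [mul_nonneg (mul_nonneg hc₂0.le (hE0 x).le) (neg_nonneg.mpr hsh.le)]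
      rw [abs_of_nonpos hGle]; ring
    · subst hx; simp [hG_def]
    · rw [Real.sign_of_pos hx]
      have hsh : 0 < Real.sinh (B * x / 2) := by
        rw [show (0:ℝ) = Real.sinh 0 by simp]
        exact Real.sinh_lt_sinh.mpr (by nlinarith)
      have hGge : 0 ≤ G x := by
        simp only [hG_def]
        exact mul_nonneg (mul_nonneg hc₂0.le hsh.le) (hE0 x).le
      rw [abs_of_nonneg hGge]; ring
  have hφeq : φ = F := funext hφF
  have hχeq : χ = G := funext hχG
  -- sum of squares
  have hsum : ∀ x, F x ^ 2 + G x ^ 2 = V x ^ (p - 1) := by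
    intro x
    rw [hF2 x, hG2 x, hVp x]
    have h1 := (hDpos x).ne'
    have h2 := (hDp0 x).ne'
    have hDx : (m + lam) * Real.cosh (B * x / 2) ^ 2
        + (m - lam) * Real.sinh (B * x / 2) ^ 2 = D x := by
      have hc := Real.cosh_sq (B * x / 2)
      rw [hDval x]; nlinarith
    clear_value D E F G
    field_simp
    linear_combination hDx
  have hpow : ∀ x, (V x ^ (p - 1)) ^ (1 / (p - 1)) = V x := by
    intro x
    rw [← Real.rpow_mul (hV0 x).le, mul_one_div_cancel hp1.ne', Real.rpow_one]
  -- key algebraic identities for the ODE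
  have key1 : ∀ S C d : ℝ, d = 2 * m * C ^ 2 - m + lam →
      c₁ * (S * (B / 2)) * d + c₁ * C * (m * (S * (2 * C)) * B) * (-(p / 2))
        = -((lam + m) * d + A) * (c₂ * S) := by
    intro S C d hd
    subst hd
    apply mul_right_cancel₀ hp1.ne'
    linear_combination (S * (-(2 * ((p - 1) * m * C ^ 2 + (m - lam) / 2)))) * hc₁s +
      (S * c₁ * ((2 * m * C ^ 2 - m + lam) / 2 - p * m * C ^ 2)) * hBq +
      (S * c₂) * hAq
  have key2 : ∀ S C d : ℝ, d = 2 * m * S ^ 2 + m + lam →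
      c₂ * (C * (B / 2)) * d + c₂ * S * (m * (S * (2 * C)) * B) * (-(p / 2))
        = ((lam - m) * d + A) * (c₁ * C) := by
    intro S C d hd
    subst hd
    apply mul_right_cancel₀ hp1.ne'
    linear_combination (C * (-(2 * ((p - 1) * m * S ^ 2 - (m + lam) / 2)))) * hc₂s +
      (C * c₂ * ((2 * m * S ^ 2 + m + lam) / 2 - p * m * S ^ 2)) * hBq +
      (-(C * c₁)) * hAq
  -- derivatives
  have hlin : ∀ x : ℝ, HasDerivAt (fun y : ℝ => B * y / 2) (B / 2) x := by
    intro x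
    simpa using ((hasDerivAt_id x).const_mul B).div_const 2
  have hcoshd : ∀ x, HasDerivAt (fun y => Real.cosh (B * y / 2))
      (Real.sinh (B * x / 2) * (B / 2)) x := fun x =>
    (Real.hasDerivAt_cosh _).comp x (hlin x)
  have hsinhd : ∀ x, HasDerivAt (fun y => Real.sinh (B * y / 2))
      (Real.cosh (B * x / 2) * (B / 2)) x := fun x =>
    (Real.hasDerivAt_sinh _).comp x (hlin x)
  have hDd : ∀ x, HasDerivAt D (m * (Real.sinh (B * x) * B)) x := by
    intro x
    have h1 : HasDerivAt (fun y : ℝ => B * y) B x := by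
      simpa using (hasDerivAt_id x).const_mul B
    exact (((Real.hasDerivAt_cosh (B * x)).comp x h1).const_mul m).add_const lam
  have hEd : ∀ x, HasDerivAt E
      (m * (Real.sinh (B * x) * B) * (-(p / 2)) * D x ^ (-(p / 2) - 1)) x := fun x =>
    (hDd x).rpow_const (Or.inl (hDpos x).ne')
  have hFd : ∀ x, HasDerivAt F
      (c₁ * (Real.sinh (B * x / 2) * (B / 2)) * E x +
        c₁ * Real.cosh (B * x / 2) *
          (m * (Real.sinh (B * x) * B) * (-(p / 2)) * D x ^ (-(p / 2) - 1))) x := fun x =>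
    ((hcoshd x).const_mul c₁).mul (hEd x)
  have hGd : ∀ x, HasDerivAt G
      (c₂ * (Real.cosh (B * x / 2) * (B / 2)) * E x +
        c₂ * Real.sinh (B * x / 2) *
          (m * (Real.sinh (B * x) * B) * (-(p / 2)) * D x ^ (-(p / 2) - 1))) x := fun x =>
    ((hsinhd x).const_mul c₂).mul (hEd x)
  have hEdiv : ∀ x, D x ^ (-(p / 2) - 1) = E x / D x := by
    intro x
    rw [Real.rpow_sub (hDpos x), Real.rpow_one]
  -- the ODE for F
  have hodeF : ∀ x, deriv F x = -(lam + m + (F x ^ 2 + G x ^ 2) ^ (1 / (p - 1))) * G x := by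
    intro x
    rw [(hFd x).deriv, hsum x, hpow x, hVD x]
    simp only [hG_def]
    rw [hsinh2 x, hEdiv x]
    have hkey := key1 (Real.sinh (B * x / 2)) (Real.cosh (B * x / 2)) (D x) (hDval x)
    have h1 := (hDpos x).ne'
    clear_value D E F G
    field_simp
    linear_combination (2 * E x) * hkey
  have hodeG : ∀ x, deriv G x = (lam - m + (F x ^ 2 + G x ^ 2) ^ (1 / (p - 1))) * F x := by
    intro x
    rw [(hGd x).deriv, hsum x, hpow x, hVD x]
    simp only [hF_def]
    rw [hsinh2 x, hEdiv x]
    have hkey := key2 (Real.sinh (B * x / 2)) (Real.cosh (B * x / 2)) (D x) (hDval' x)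
    have h1 := (hDpos x).ne'
    clear_value D E F G
    field_simp
    apply mul_right_cancel₀ (Real.cosh_pos (B * x / 2)).ne'
    linear_combination (2 * E x) * hkey
  -- decay bound
  have hbound : ∀ x, V x ^ (p - 1)
      ≤ (4 * A / (m + lam)) ^ (p - 1) * Real.exp (-((p - 1) * B * |x|)) := by
    intro x
    have h1 : Real.exp (B * |x|) ≤ 2 * Real.cosh (B * x) := by
      rcases le_or_gt 0 x with hx | hx
      · rw [abs_of_nonneg hx, Real.cosh_eq]
        have := (Real.exp_pos (-(B * x))).le
        linarith
      · rw [abs_of_neg hx, show B * -x = -(B * x) by ring, Real.cosh_eq]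
        have := (Real.exp_pos (B * x)).le
        linarith
    have hc := Real.one_le_cosh (B * x)
    have h2 : (m + lam) / 4 * Real.exp (B * |x|) ≤ D x := by
      simp only [hD_def]
      nlinarith [h1, hc, Real.exp_pos (B * |x|)]
    have h3 : V x ≤ 4 * A / (m + lam) * Real.exp (-(B * |x|)) := by
      rw [hVD x, Real.exp_neg]
      calc A / D x ≤ A / ((m + lam) / 4 * Real.exp (B * |x|)) :=
            div_le_div_of_nonneg_left hA0.le (by positivity) h2
        _ = 4 * A / (m + lam) * (Real.exp (B * |x|))⁻¹ := by
            have he := (Real.exp_pos (B * |x|)).ne'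
            field_simp
    have h4 : V x ^ (p - 1)
        ≤ (4 * A / (m + lam) * Real.exp (-(B * |x|))) ^ (p - 1) :=
      Real.rpow_le_rpow (hV0 x).le h3 hp1.le
    calc V x ^ (p - 1) ≤ (4 * A / (m + lam) * Real.exp (-(B * |x|))) ^ (p - 1) := h4
      _ = (4 * A / (m + lam)) ^ (p - 1) * Real.exp (-(B * |x|)) ^ (p - 1) :=
          Real.mul_rpow (by positivity) (Real.exp_pos _).le
      _ = (4 * A / (m + lam)) ^ (p - 1) * Real.exp (-((p - 1) * B * |x|)) := by
          rw [← Real.exp_mul]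
          congr 1
          ring
  have hFdiff : Differentiable ℝ F := fun x => (hFd x).differentiableAt
  have hGdiff : Differentiable ℝ G := fun x => (hGd x).differentiableAt
  have hmes : Integrable
      (fun x : ℝ => (4 * A / (m + lam)) ^ (p - 1) * Real.exp (-((p - 1) * B * |x|))) :=
    (integrable_exp_neg_abs_aux (mul_pos hp1 hB0)).const_mul _
  have hintF : Integrable (fun x => F x ^ 2) := by
    refine hmes.mono' ((hFdiff.continuous.pow 2).aestronglyMeasurable) ?_
    filter_upwards with x
    rw [Real.norm_eq_abs, abs_of_nonneg (sq_nonneg _)]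
    have := hbound x
    have h2 := hsum x
    nlinarith [sq_nonneg (G x)]
  have hintG : Integrable (fun x => G x ^ 2) := by
    refine hmes.mono' ((hGdiff.continuous.pow 2).aestronglyMeasurable) ?_
    filter_upwards with x
    rw [Real.norm_eq_abs, abs_of_nonneg (sq_nonneg _)]
    have := hbound x
    have h2 := hsum x
    nlinarith [sq_nonneg (F x)]
  refine ⟨⟨hV0, ?_, ?_⟩, ?_, ?_, ?_, ?_, ?_, ?_, ?_⟩
  · -- evenness
    intro x
    rw [hV, hV, show B * -x = -(B * x) by ring, Real.cosh_neg]
  · -- strict antitonicity on (0, ∞)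
    intro x hx y hy hxy
    rw [hVD x, hVD y]
    refine div_lt_div_of_pos_left hA0 (hDpos x) ?_
    simp only [hD_def]
    have hcc : Real.cosh (B * x) < Real.cosh (B * y) := by
      rw [Real.cosh_lt_cosh,
        abs_of_pos (mul_pos hB0 (Set.mem_Ioi.mp hx)),
        abs_of_pos (mul_pos hB0 (Set.mem_Ioi.mp hy))]
      exact mul_lt_mul_of_pos_left hxy hB0
    nlinarith
  · -- sum of squares
    intro x
    rw [hφF x, hχG x]
    exact hsum x
  · rw [hφeq]; exact hFdiff
  · rw [hχeq]; exact hGdiff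
  · rw [hφeq]; exact hintF
  · rw [hχeq]; exact hintG
  · intro x
    rw [hφeq, hχeq]
    exact hodeF x
  · intro x
    rw [hφeq, hχeq]
    exact hodeG x
end

section
/- Let m > 0, λ ∈ (−m, m) and p > 1. If Ψ₁ = (φ₁, χ₁)ᵀ and Ψ₂ = (φ₂, χ₂)ᵀ are two continuously differentiable, square-integrable, not identically zero solutions Ψ : ℝ → ℂ² of the one-dimensional nonlinear Dirac system φ' = −(λ + m + (|φ|² + |χ|²)^{1/(p−1)}) χ, χ' = (λ − m + (|φ|² + |χ|²)^{1/(p−1)}) φ, then there exist θ ∈ ℝ and x₀ ∈ ℝ such that Ψ₂(x) = e^{iθ} Ψ₁(x − x₀) for all x ∈ ℝ. In other words, the nonzero L² solution of this system is unique up to a phase factor and a translation. -/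
/-!
Write `s = |φ|² + |χ|²` and `q = 1 / (p - 1)`. Since `s' = -4m Re(φ̄χ)` and `2|Re(φ̄χ)| ≤ s`,
Grönwall shows that a nonzero solution never vanishes; for an `L²` solution both `s` and `s'`
are integrable, so the solution tends to `0` at infinity. Hence the two first integrals
`Im(χφ̄)` and `H = λs + s^(q+1)/(q+1) - m(|φ|² - |χ|²)` vanish identically. At a maximum `c`
of `s` also `Re(φ̄χ) = 0`, so `φ(c) = 0` or `χ(c) = 0`; `H = 0` and `λ > -m` exclude the first,
and then `H = 0` determines `|φ(c)|` in terms of `m`, `λ`, `q`. So after a translation and a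
phase rotation two solutions agree at one point, and since the vector field is `C¹` away from
`0`, Cauchy–Lipschitz uniqueness makes them agree everywhere.
-/

open MeasureTheory Filter Topology Set ComplexConjugate InnerProductSpace

theorem eq_of_hasDerivAt_of_contDiffAt {E : Type*} [NormedAddCommGroup E] [NormedSpace ℝ E]
    {v : E → E} {f g : ℝ → E} {t₀ : ℝ} (hv : ∀ t, ContDiffAt ℝ 1 v (f t))
    (hf : ∀ t, HasDerivAt f (v (f t)) t) (hg : ∀ t, HasDerivAt g (v (g t)) t)
    (h₀ : f t₀ = g t₀) : f = g := by
  have hclopen : IsClopen {t | f t = g t} := by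
    refine ⟨isClosed_eq (continuous_iff_continuousAt.2 fun t => (hf t).continuousAt)
      (continuous_iff_continuousAt.2 fun t => (hg t).continuousAt), ?_⟩
    refine isOpen_iff_mem_nhds.2 fun t (ht : f t = g t) => ?_
    obtain ⟨K, s, hs, hK⟩ := (hv t).exists_lipschitzOnWith
    have hfs := (hf t).continuousAt.preimage_mem_nhds hs
    have hgs := (hg t).continuousAt.preimage_mem_nhds (ht ▸ hs)
    exact ODE_solution_unique_of_eventually (v := fun _ => v) (s := fun _ => s)
      (.of_forall fun _ => hK) (mem_of_superset hfs fun u hu => ⟨hf u, hu⟩)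
      (mem_of_superset hgs fun u hu => ⟨hg u, hu⟩) ht
  funext t
  exact eq_univ_iff_forall.1 (hclopen.eq_univ ⟨t₀, h₀⟩) t

theorem eq_zero_of_abs_deriv_le_mul {f f' : ℝ → ℝ} {K : ℝ} (hf : ∀ x, HasDerivAt f (f' x) x)
    (hnonneg : 0 ≤ f) (hbound : ∀ x, |f' x| ≤ K * f x) {x₀ : ℝ} (h₀ : f x₀ = 0) : f = 0 := by
  have hanti : Antitone fun x => Real.exp (-K * x) * f x :=
    antitone_of_hasDerivAt_nonpos
      (fun x => (((hasDerivAt_id' x).const_mul (-K)).exp).mul (hf x)) fun x => by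
        have := (abs_le.1 (hbound x)).2
        have := Real.exp_pos (-K * x)
        simp only [Pi.zero_apply]
        nlinarith
  have hmono : Monotone fun x => Real.exp (K * x) * f x :=
    monotone_of_hasDerivAt_nonneg
      (fun x => (((hasDerivAt_id' x).const_mul K).exp).mul (hf x)) fun x => by
        have := (abs_le.1 (hbound x)).1
        have := Real.exp_pos (K * x)
        simp only [Pi.zero_apply]
        nlinarith
  funext x
  refine le_antisymm ?_ (hnonneg x)
  rcases le_total x₀ x with hx | hx
  · exact nonpos_of_mul_nonpos_right (by simpa [h₀] using hanti hx) (Real.exp_pos _)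
  · exact nonpos_of_mul_nonpos_right (by simpa [h₀] using hmono hx) (Real.exp_pos _)

theorem eq_zero_of_hasDerivAt_zero_of_tendsto {E : Type*} [NormedAddCommGroup E]
    [NormedSpace ℝ E] {f : ℝ → E} {l : Filter ℝ} [l.NeBot] (hf : ∀ x, HasDerivAt f 0 x)
    (hl : Tendsto f l (𝓝 0)) (x : ℝ) : f x = 0 := by
  have hconst : f = fun _ => f x :=
    funext fun y => is_const_of_deriv_eq_zero (fun t => (hf t).differentiableAt)
      (fun t => (hf t).deriv) y x
  rw [hconst] at hl
  exact tendsto_nhds_unique tendsto_const_nhds hl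

theorem Complex.exists_exp_mul_I_mul_eq {a b : ℂ} (ha : a ≠ 0) (h : ‖a‖ = ‖b‖) :
    ∃ θ : ℝ, b = Complex.exp (θ * Complex.I) * a := by
  refine ⟨Complex.arg (b / a), ?_⟩
  have hu : ‖b / a‖ = 1 := by rw [norm_div, ← h, div_self (norm_ne_zero_iff.2 ha)]
  rw [← one_mul (Complex.exp _), ← Complex.ofReal_one, ← hu, Complex.norm_mul_exp_arg_mul_I,
    div_mul_cancel₀ _ ha]

namespace NonlinearDirac

noncomputable section

def density (z : ℂ × ℂ) : ℝ := ‖z.1‖ ^ 2 + ‖z.2‖ ^ 2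

def field (m lam q : ℝ) (z : ℂ × ℂ) : ℂ × ℂ :=
  (-((lam + m + density z ^ q) • z.2), (lam - m + density z ^ q) • z.1)

-- `∂H/∂|χ|² = λ + m + s^q` and `∂H/∂|φ|² = λ - m + s^q`: the system is Hamiltonian.
def hamiltonian (m lam q : ℝ) (z : ℂ × ℂ) : ℝ :=
  lam * density z + density z ^ (q + 1) / (q + 1) - m * (‖z.1‖ ^ 2 - ‖z.2‖ ^ 2)

def IsSolution (m lam q : ℝ) (ψ : ℝ → ℂ × ℂ) : Prop :=
  ∀ x, HasDerivAt ψ (field m lam q (ψ x)) x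

end

variable {m lam q : ℝ} {z : ℂ × ℂ}

theorem density_nonneg (z : ℂ × ℂ) : 0 ≤ density z := by unfold density; positivity

theorem density_eq_zero_iff : density z = 0 ↔ z = 0 := by
  simp [density, add_eq_zero_iff_of_nonneg (sq_nonneg ‖z.1‖) (sq_nonneg ‖z.2‖), Prod.ext_iff]

theorem density_pos_iff : 0 < density z ↔ z ≠ 0 :=
  (density_nonneg z).lt_iff_ne'.trans density_eq_zero_iff.not

theorem sq_norm_le_density (z : ℂ × ℂ) : ‖z‖ ^ 2 ≤ density z := by
  rw [Prod.norm_def, density]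
  rcases le_total ‖z.1‖ ‖z.2‖ with h | h
  · rw [max_eq_right h]; nlinarith [sq_nonneg ‖z.1‖]
  · rw [max_eq_left h]; nlinarith [sq_nonneg ‖z.2‖]

theorem two_mul_abs_inner_le_density (z : ℂ × ℂ) : 2 * |⟪z.1, z.2⟫_ℝ| ≤ density z := by
  rw [density]
  linarith [abs_real_inner_le_norm z.1 z.2, two_mul_le_add_sq ‖z.1‖ ‖z.2‖]

theorem contDiff_density : ContDiff ℝ 1 density :=
  ((contDiff_norm_sq ℝ).comp contDiff_fst).add ((contDiff_norm_sq ℝ).comp contDiff_snd)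

theorem density_smul {u : ℂ} (hu : ‖u‖ = 1) (z : ℂ × ℂ) : density (u • z) = density z := by
  simp [density, hu]

theorem field_smul {u : ℂ} (hu : ‖u‖ = 1) (z : ℂ × ℂ) :
    field m lam q (u • z) = u • field m lam q z := by
  simp only [field, density_smul hu, Prod.smul_fst, Prod.smul_snd, Prod.smul_mk, smul_neg,
    smul_comm u]

theorem contDiffAt_field (hz : z ≠ 0) : ContDiffAt ℝ 1 (field m lam q) z := by
  have hd : ContDiffAt ℝ 1 (fun z => density z ^ q) z :=
    contDiff_density.contDiffAt.rpow_const_of_ne (density_pos_iff.2 hz).ne'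
  unfold field
  fun_prop

theorem continuous_hamiltonian (hq : 0 ≤ q) : Continuous (hamiltonian m lam q) := by
  have hd := contDiff_density.continuous
  have := (Real.continuous_rpow_const (by linarith : 0 ≤ q + 1)).comp hd
  unfold hamiltonian
  fun_prop

theorem hamiltonian_zero (hq : 0 ≤ q) : hamiltonian m lam q 0 = 0 := by
  simp [hamiltonian, density, Real.zero_rpow (by linarith : q + 1 ≠ 0)]

theorem inner_fst_field (z : ℂ × ℂ) :
    ⟪z.1, (field m lam q z).1⟫_ℝ = -(lam + m + density z ^ q) * ⟪z.1, z.2⟫_ℝ := by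
  simp only [field, inner_neg_right, real_inner_smul_right, neg_mul]

theorem inner_snd_field (z : ℂ × ℂ) :
    ⟪z.2, (field m lam q z).2⟫_ℝ = (lam - m + density z ^ q) * ⟪z.1, z.2⟫_ℝ := by
  simp only [field, real_inner_smul_right, real_inner_comm z.1]

theorem abs_deriv_density_le (m : ℝ) (z : ℂ × ℂ) :
    |-4 * m * ⟪z.1, z.2⟫_ℝ| ≤ 2 * |m| * density z :=
  calc |-4 * m * ⟪z.1, z.2⟫_ℝ| = 2 * |m| * (2 * |⟪z.1, z.2⟫_ℝ|) := by
        rw [abs_mul, abs_mul, abs_neg, abs_of_pos four_pos]; ring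
    _ ≤ 2 * |m| * density z := by gcongr; exact two_mul_abs_inner_le_density z

theorem hamiltonian_pos_of_fst_eq_zero (hq : 0 ≤ q) (hlam : -m < lam) (h1 : z.1 = 0)
    (hz : z ≠ 0) : 0 < hamiltonian m lam q z := by
  have hd := density_pos_iff.2 hz
  have hd2 : ‖z.2‖ ^ 2 = density z := by simp [density, h1]
  have : 0 ≤ density z ^ (q + 1) / (q + 1) := by positivity
  rw [hamiltonian, h1, norm_zero, hd2]
  nlinarith

theorem norm_fst_eq_of_hamiltonian_eq_zero (hq : 0 < q) (h2 : z.2 = 0) (hz : z ≠ 0)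
    (hH : hamiltonian m lam q z = 0) : ‖z.1‖ = ((m - lam) * (q + 1)) ^ (2 * q)⁻¹ := by
  have hd := density_pos_iff.2 hz
  have hd1 : density z = ‖z.1‖ ^ 2 := by simp [density, h2]
  have hpow : density z ^ q = (m - lam) * (q + 1) := by
    rw [hamiltonian, Real.rpow_add_one hd.ne', h2, norm_zero, ← hd1] at hH
    field_simp at hH
    nlinarith
  rw [← hpow, hd1, ← Real.rpow_natCast, ← Real.rpow_mul (norm_nonneg _), Nat.cast_ofNat,
    Real.rpow_rpow_inv (norm_nonneg _) (by positivity)]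

theorem integrable_density {ψ : ℝ → ℂ × ℂ} (h1 : MemLp (fun x => (ψ x).1) 2 volume)
    (h2 : MemLp (fun x => (ψ x).2) 2 volume) : Integrable fun x => density (ψ x) :=
  (h1.integrable_norm_pow two_ne_zero).add (h2.integrable_norm_pow two_ne_zero)

theorem isSolution_of_deriv_eq {φ χ : ℝ → ℂ} (hφ : Differentiable ℝ φ)
    (hχ : Differentiable ℝ χ)
    (hφ' : ∀ x, deriv φ x = -(((lam + m + (‖φ x‖ ^ 2 + ‖χ x‖ ^ 2) ^ q : ℝ)) : ℂ) * χ x)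
    (hχ' : ∀ x, deriv χ x = (((lam - m + (‖φ x‖ ^ 2 + ‖χ x‖ ^ 2) ^ q : ℝ)) : ℂ) * φ x) :
    IsSolution m lam q fun x => (φ x, χ x) := fun x => by
  convert (hφ x).hasDerivAt.prodMk (hχ x).hasDerivAt using 1
  simp [field, density, Complex.real_smul, hφ', hχ']
  ring

namespace IsSolution

variable {ψ : ℝ → ℂ × ℂ}

theorem continuous (h : IsSolution m lam q ψ) : Continuous ψ :=
  continuous_iff_continuousAt.2 fun x => (h x).continuousAt

theorem comp_sub_const (h : IsSolution m lam q ψ) (c : ℝ) :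
    IsSolution m lam q fun x => ψ (x - c) :=
  fun x => (h (x - c)).comp_sub_const x c

theorem const_smul (h : IsSolution m lam q ψ) {u : ℂ} (hu : ‖u‖ = 1) :
    IsSolution m lam q fun x => u • ψ x := fun x => by
  rw [field_smul hu]
  exact (h x).const_smul u

theorem hasDerivAt_fst (h : IsSolution m lam q ψ) (x : ℝ) :
    HasDerivAt (fun x => (ψ x).1) (field m lam q (ψ x)).1 x := by
  simpa using (h x).hasFDerivAt.fst.hasDerivAt

theorem hasDerivAt_snd (h : IsSolution m lam q ψ) (x : ℝ) :
    HasDerivAt (fun x => (ψ x).2) (field m lam q (ψ x)).2 x := by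
  simpa using (h x).hasFDerivAt.snd.hasDerivAt

theorem hasDerivAt_density (h : IsSolution m lam q ψ) (x : ℝ) :
    HasDerivAt (fun x => density (ψ x)) (-4 * m * ⟪(ψ x).1, (ψ x).2⟫_ℝ) x := by
  refine ((h.hasDerivAt_fst x).norm_sq.add (h.hasDerivAt_snd x).norm_sq).congr_deriv ?_
  rw [inner_fst_field, inner_snd_field]
  ring

theorem hasDerivAt_im (h : IsSolution m lam q ψ) (x : ℝ) :
    HasDerivAt (fun x => ((ψ x).2 * conj (ψ x).1).im) 0 x := by
  -- `(χ φ̄)' = (λ - m + s^q)|φ|² - (λ + m + s^q)|χ|²` is real.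
  have := Complex.imCLM.hasFDerivAt.comp_hasDerivAt x
    ((h.hasDerivAt_snd x).mul (h.hasDerivAt_fst x).star)
  refine this.congr_deriv ?_
  simp [field]
  ring

theorem hasDerivAt_hamiltonian (h : IsSolution m lam q ψ) (hq : 0 ≤ q) (x : ℝ) :
    HasDerivAt (fun x => hamiltonian m lam q (ψ x)) 0 x := by
  have hd := h.hasDerivAt_density x
  have hpow := hd.rpow_const (p := q + 1) (Or.inr (by linarith))
  have hdiff := (h.hasDerivAt_fst x).norm_sq.sub (h.hasDerivAt_snd x).norm_sq
  refine (((hd.const_mul lam).add (hpow.div_const (q + 1))).sub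
    (hdiff.const_mul m)).congr_deriv ?_
  rw [inner_fst_field, inner_snd_field, add_sub_cancel_right]
  field_simp
  ring

theorem apply_ne_zero (h : IsSolution m lam q ψ) (hψ : ψ ≠ 0) (x : ℝ) : ψ x ≠ 0 := by
  intro hx
  have := eq_zero_of_abs_deriv_le_mul h.hasDerivAt_density (fun y => density_nonneg (ψ y))
    (fun y => abs_deriv_density_le m (ψ y)) (density_eq_zero_iff.2 hx)
  exact hψ (funext fun y => density_eq_zero_iff.1 (congrFun this y))

theorem eq_of_apply_eq (h : IsSolution m lam q ψ) (hψ : ψ ≠ 0) {ψ' : ℝ → ℂ × ℂ}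
    (h' : IsSolution m lam q ψ') {t : ℝ} (ht : ψ t = ψ' t) : ψ = ψ' :=
  eq_of_hasDerivAt_of_contDiffAt (fun x => contDiffAt_field (h.apply_ne_zero hψ x)) h h' ht

theorem tendsto_cocompact (h : IsSolution m lam q ψ) (hs : Integrable fun x => density (ψ x)) :
    Tendsto ψ (cocompact ℝ) (𝓝 0) := by
  have hs' : Integrable fun x => -4 * m * ⟪(ψ x).1, (ψ x).2⟫_ℝ := by
    refine (hs.const_mul (2 * |m|)).mono' ?_ (ae_of_all _ fun x => abs_deriv_density_le m (ψ x))
    have := h.continuous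
    exact (by fun_prop : Continuous fun x => -4 * m * ⟪(ψ x).1, (ψ x).2⟫_ℝ).aestronglyMeasurable
  have hdensity : Tendsto (fun x => density (ψ x)) (cocompact ℝ) (𝓝 0) := by
    rw [cocompact_eq_atBot_atTop]
    exact (tendsto_zero_of_hasDerivAt_of_integrableOn_Iic (a := 0)
      (fun x _ => h.hasDerivAt_density x) hs'.integrableOn hs.integrableOn).sup
      (tendsto_zero_of_hasDerivAt_of_integrableOn_Ioi (a := 0)
      (fun x _ => h.hasDerivAt_density x) hs'.integrableOn hs.integrableOn)
  refine tendsto_zero_iff_norm_tendsto_zero.2 (squeeze_zero (fun _ => norm_nonneg _)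
    (fun x => Real.le_sqrt_of_sq_le (sq_norm_le_density (ψ x))) ?_)
  simpa using hdensity.sqrt

theorem im_eq_zero (h : IsSolution m lam q ψ) (hs : Integrable fun x => density (ψ x)) (x : ℝ) :
    ((ψ x).2 * conj (ψ x).1).im = 0 := by
  have hc : Continuous fun z : ℂ × ℂ => (z.2 * conj z.1).im := by fun_prop
  exact eq_zero_of_hasDerivAt_zero_of_tendsto h.hasDerivAt_im
    ((hc.tendsto' 0 0 (by simp)).comp (h.tendsto_cocompact hs)) x

theorem hamiltonian_eq_zero (h : IsSolution m lam q ψ) (hq : 0 ≤ q)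
    (hs : Integrable fun x => density (ψ x)) (x : ℝ) : hamiltonian m lam q (ψ x) = 0 :=
  eq_zero_of_hasDerivAt_zero_of_tendsto (h.hasDerivAt_hamiltonian hq)
    (((continuous_hamiltonian hq).tendsto' 0 0 (hamiltonian_zero hq)).comp
      (h.tendsto_cocompact hs)) x

theorem exists_forall_density_le (h : IsSolution m lam q ψ)
    (hs : Integrable fun x => density (ψ x)) (hψ : ψ ≠ 0) :
    ∃ c, ∀ x, density (ψ x) ≤ density (ψ c) := by
  obtain ⟨x₀, hx₀⟩ : ∃ x₀, ψ x₀ ≠ 0 := by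
    by_contra! h0
    exact hψ (funext h0)
  have hlim : Tendsto (fun x => density (ψ x)) (cocompact ℝ) (𝓝 0) :=
    (contDiff_density.continuous.tendsto' 0 0 (density_eq_zero_iff.2 rfl)).comp
      (h.tendsto_cocompact hs)
  exact (contDiff_density.continuous.comp h.continuous).exists_forall_ge' x₀
    ((hlim.eventually (gt_mem_nhds (density_pos_iff.2 hx₀))).mono fun _ => le_of_lt)

theorem exists_center (h : IsSolution m lam q ψ) (hm : m ≠ 0) (hlam : -m < lam) (hq : 0 < q)
    (hs : Integrable fun x => density (ψ x)) (hψ : ψ ≠ 0) :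
    ∃ c, (ψ c).2 = 0 ∧ ‖(ψ c).1‖ = ((m - lam) * (q + 1)) ^ (2 * q)⁻¹ := by
  obtain ⟨c, hc⟩ := h.exists_forall_density_le hs hψ
  have hinner : ⟪(ψ c).1, (ψ c).2⟫_ℝ = 0 := by
    simpa [hm] using IsLocalMax.hasDerivAt_eq_zero (.of_forall hc) (h.hasDerivAt_density c)
  have hprod : (ψ c).2 * conj (ψ c).1 = 0 :=
    Complex.ext ((Complex.inner _ _).symm.trans hinner) (h.im_eq_zero hs c)
  have hH := h.hamiltonian_eq_zero hq.le hs c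
  have hne := h.apply_ne_zero hψ c
  rcases mul_eq_zero.1 hprod with h2 | h1
  · exact ⟨c, h2, norm_fst_eq_of_hamiltonian_eq_zero hq h2 hne hH⟩
  · exact absurd hH (hamiltonian_pos_of_fst_eq_zero hq.le hlam (by simpa using h1) hne).ne'

end IsSolution

end NonlinearDirac

open NonlinearDirac

theorem oneDim_nonlinear_dirac_uniqueness_general
    (m lam p : ℝ) (hm : 0 < m) (hlam₁ : -m < lam) (hp : 1 < p)
    (φ₁ χ₁ φ₂ χ₂ : ℝ → ℂ)
    (hreg₁ : ContDiff ℝ 1 φ₁ ∧ ContDiff ℝ 1 χ₁)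
    (hreg₂ : ContDiff ℝ 1 φ₂ ∧ ContDiff ℝ 1 χ₂)
    (hL2₁ : MemLp φ₁ 2 volume ∧ MemLp χ₁ 2 volume)
    (hL2₂ : MemLp φ₂ 2 volume ∧ MemLp χ₂ 2 volume)
    (hne₁ : ¬ (∀ x, φ₁ x = 0 ∧ χ₁ x = 0))
    (hne₂ : ¬ (∀ x, φ₂ x = 0 ∧ χ₂ x = 0))
    (hode₁ : ∀ x, deriv φ₁ x
        = -(((lam + m + (‖φ₁ x‖ ^ 2 + ‖χ₁ x‖ ^ 2) ^ (1 / (p - 1)) : ℝ)) : ℂ) * χ₁ x)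
    (hode₁' : ∀ x, deriv χ₁ x
        = (((lam - m + (‖φ₁ x‖ ^ 2 + ‖χ₁ x‖ ^ 2) ^ (1 / (p - 1)) : ℝ)) : ℂ) * φ₁ x)
    (hode₂ : ∀ x, deriv φ₂ x
        = -(((lam + m + (‖φ₂ x‖ ^ 2 + ‖χ₂ x‖ ^ 2) ^ (1 / (p - 1)) : ℝ)) : ℂ) * χ₂ x)
    (hode₂' : ∀ x, deriv χ₂ x
        = (((lam - m + (‖φ₂ x‖ ^ 2 + ‖χ₂ x‖ ^ 2) ^ (1 / (p - 1)) : ℝ)) : ℂ) * φ₂ x) :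
    ∃ θ x₀ : ℝ, ∀ x : ℝ,
      φ₂ x = Complex.exp (θ * Complex.I) * φ₁ (x - x₀) ∧
      χ₂ x = Complex.exp (θ * Complex.I) * χ₁ (x - x₀) := by
  have hq : 0 < 1 / (p - 1) := one_div_pos.2 (sub_pos.2 hp)
  have h₁ := isSolution_of_deriv_eq (m := m) (lam := lam)
    (hreg₁.1.differentiable one_ne_zero) (hreg₁.2.differentiable one_ne_zero) hode₁ hode₁'
  have h₂ := isSolution_of_deriv_eq (m := m) (lam := lam)
    (hreg₂.1.differentiable one_ne_zero) (hreg₂.2.differentiable one_ne_zero) hode₂ hode₂'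
  have hψ₁ : (fun x => (φ₁ x, χ₁ x)) ≠ 0 := fun h => hne₁ fun x => Prod.ext_iff.1 (congrFun h x)
  have hψ₂ : (fun x => (φ₂ x, χ₂ x)) ≠ 0 := fun h => hne₂ fun x => Prod.ext_iff.1 (congrFun h x)
  obtain ⟨c₁, hχ₁, hφ₁⟩ :=
    h₁.exists_center hm.ne' hlam₁ hq (integrable_density hL2₁.1 hL2₁.2) hψ₁
  obtain ⟨c₂, hχ₂, hφ₂⟩ :=
    h₂.exists_center hm.ne' hlam₁ hq (integrable_density hL2₂.1 hL2₂.2) hψ₂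
  obtain ⟨θ, hθ⟩ := Complex.exists_exp_mul_I_mul_eq
    (fun h => h₁.apply_ne_zero hψ₁ c₁ (Prod.ext h hχ₁)) (hφ₁.trans hφ₂.symm)
  have h₁' := (h₁.comp_sub_const (c₂ - c₁)).const_smul (Complex.norm_exp_ofReal_mul_I θ)
  dsimp only at hθ hχ₁ hχ₂
  have key := h₂.eq_of_apply_eq hψ₂ h₁' (t := c₂) (by simp [hθ, hχ₁, hχ₂])
  exact ⟨θ, c₂ - c₁, fun x => Prod.ext_iff.1 (congrFun key x)⟩

/-- **Uniqueness up to phase and translation of the nonzero L² solution of the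
one-dimensional nonlinear Dirac system.** -/
theorem oneDim_nonlinear_dirac_uniqueness
    (m lam p : ℝ) (hm : 0 < m) (hlam₁ : -m < lam) (hlam₂ : lam < m) (hp : 1 < p)
    (φ₁ χ₁ φ₂ χ₂ : ℝ → ℂ)
    (hreg₁ : ContDiff ℝ 1 φ₁ ∧ ContDiff ℝ 1 χ₁)
    (hreg₂ : ContDiff ℝ 1 φ₂ ∧ ContDiff ℝ 1 χ₂)
    (hL2₁ : MemLp φ₁ 2 volume ∧ MemLp χ₁ 2 volume)
    (hL2₂ : MemLp φ₂ 2 volume ∧ MemLp χ₂ 2 volume)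
    (hne₁ : ¬ (∀ x, φ₁ x = 0 ∧ χ₁ x = 0))
    (hne₂ : ¬ (∀ x, φ₂ x = 0 ∧ χ₂ x = 0))
    (hode₁ : ∀ x, deriv φ₁ x
        = -(((lam + m + (‖φ₁ x‖ ^ 2 + ‖χ₁ x‖ ^ 2) ^ (1 / (p - 1)) : ℝ)) : ℂ) * χ₁ x)
    (hode₁' : ∀ x, deriv χ₁ x
        = (((lam - m + (‖φ₁ x‖ ^ 2 + ‖χ₁ x‖ ^ 2) ^ (1 / (p - 1)) : ℝ)) : ℂ) * φ₁ x)
    (hode₂ : ∀ x, deriv φ₂ x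
        = -(((lam + m + (‖φ₂ x‖ ^ 2 + ‖χ₂ x‖ ^ 2) ^ (1 / (p - 1)) : ℝ)) : ℂ) * χ₂ x)
    (hode₂' : ∀ x, deriv χ₂ x
        = (((lam - m + (‖φ₂ x‖ ^ 2 + ‖χ₂ x‖ ^ 2) ^ (1 / (p - 1)) : ℝ)) : ℂ) * φ₂ x) :
    ∃ θ x₀ : ℝ, ∀ x : ℝ,
      φ₂ x = Complex.exp (θ * Complex.I) * φ₁ (x - x₀) ∧
      χ₂ x = Complex.exp (θ * Complex.I) * χ₁ (x - x₀) :=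
  oneDim_nonlinear_dirac_uniqueness_general m lam p hm hlam₁ hp φ₁ χ₁ φ₂ χ₂ hreg₁ hreg₂ hL2₁ hL2₂
    hne₁ hne₂ hode₁ hode₁' hode₂ hode₂'
end

section
/- Let m > 0, λ ∈ ℝ and p > 1. Suppose φ, χ : ℝ → ℂ are differentiable and solve the one-dimensional nonlinear Dirac system φ' = −(λ + m + (|φ|² + |χ|²)^{1/(p−1)}) χ, χ' = (λ − m + (|φ|² + |χ|²)^{1/(p−1)}) φ on ℝ. Then the functions x ↦ H(φ(x), χ(x)) := m(|χ(x)|² − |φ(x)|²) + λ(|χ(x)|² + |φ(x)|²) + ((p−1)/p)(|χ(x)|² + |φ(x)|²)^{p/(p−1)} and x ↦ G(φ(x), χ(x)) := conj(χ(x)) φ(x) − conj(φ(x)) χ(x) are constant on ℝ. -/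
/-!
Write `ρ = ‖φ‖² + ‖χ‖²`, `f(ρ) = ρ^{1/(p-1)}` and `r = ⟪φ, χ⟫_ℝ = Re(conj φ · χ)`. Along a solution
`(‖φ‖²)' = -2(λ + m + f(ρ)) r` and `(‖χ‖²)' = 2(λ - m + f(ρ)) r`, hence `ρ' = -4 m r` and
`(‖χ‖² - ‖φ‖²)' = 4(λ + f(ρ)) r`. Since `F(ρ) = ((p-1)/p) ρ^{p/(p-1)}` is a primitive of `f`,
`H' = 4m(λ + f(ρ)) r - 4mλ r - 4m f(ρ) r = 0`. For `G` only the reality of the two coefficients matters: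
`G' = b|φ|² - a|χ|² + a|χ|² - b|φ|²`.
-/

open Complex ComplexConjugate

section Hamiltonian

variable {E : Type*} [NormedAddCommGroup E] [InnerProductSpace ℝ E]

def diracHamiltonian (m lam : ℝ) (F : ℝ → ℝ) (u v : E) : ℝ :=
  m * (‖v‖ ^ 2 - ‖u‖ ^ 2) + lam * (‖v‖ ^ 2 + ‖u‖ ^ 2) + F (‖v‖ ^ 2 + ‖u‖ ^ 2)

theorem hasDerivAt_diracHamiltonian {m lam : ℝ} {f F : ℝ → ℝ} {φ χ : ℝ → E} {x : ℝ}
    (hF : ∀ ρ, HasDerivAt F (f ρ) ρ)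
    (hφ : HasDerivAt φ (-(lam + m + f (‖φ x‖ ^ 2 + ‖χ x‖ ^ 2)) • χ x) x)
    (hχ : HasDerivAt χ ((lam - m + f (‖φ x‖ ^ 2 + ‖χ x‖ ^ 2)) • φ x) x) :
    HasDerivAt (fun x => diracHamiltonian m lam F (φ x) (χ x)) 0 x := by
  have hρ := hχ.norm_sq.add hφ.norm_sq
  refine ((((hχ.norm_sq.sub hφ.norm_sq).const_mul m).add (hρ.const_mul lam)).add
    ((hF _).comp x hρ)).congr_deriv ?_
  simp only [inner_smul_right, real_inner_comm (χ x), Pi.add_apply, add_comm (‖χ x‖ ^ 2)]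
  ring

end Hamiltonian

def diracCharge (u v : ℂ) : ℂ := conj v * u - conj u * v

theorem hasDerivAt_diracCharge {a b : ℝ} {φ χ : ℝ → ℂ} {x : ℝ}
    (hφ : HasDerivAt φ (-a • χ x) x) (hχ : HasDerivAt χ (b • φ x) x) :
    HasDerivAt (fun x => diracCharge (φ x) (χ x)) 0 x := by
  refine ((hχ.star.mul hφ).sub (hφ.star.mul hχ)).congr_deriv ?_
  simp only [star_smul, star_trivial, smul_mul_assoc, mul_smul_comm, Complex.star_def]
  abel

theorem hasDerivAt_rpow_primitive {p : ℝ} (hp : 1 < p) (ρ : ℝ) :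
    HasDerivAt (fun ρ => (p - 1) / p * ρ ^ (p / (p - 1))) (ρ ^ (1 / (p - 1))) ρ := by
  have hp₁ : p - 1 ≠ 0 := by linarith
  have hexp : p / (p - 1) - 1 = 1 / (p - 1) := by field_simp; ring
  have hq : 1 ≤ p / (p - 1) := by rw [le_div_iff₀ (by linarith)]; linarith
  refine ((Real.hasDerivAt_rpow_const (Or.inr hq)).const_mul ((p - 1) / p)).congr_deriv ?_
  rw [hexp]
  field_simp

theorem eq_of_forall_hasDerivAt_zero {F : Type*} [NormedAddCommGroup F] [NormedSpace ℝ F]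
    {g : ℝ → F} (hg : ∀ x, HasDerivAt g 0 x) (x y : ℝ) : g x = g y :=
  is_const_of_deriv_eq_zero (fun x => (hg x).differentiableAt) (fun x => (hg x).deriv) x y

theorem oneDim_nonlinear_dirac_conserved_general
    (m lam p : ℝ) (hp : 1 < p)
    (φ χ : ℝ → ℂ)
    (hφ : Differentiable ℝ φ) (hχ : Differentiable ℝ χ)
    (hode : ∀ x, deriv φ x
        = -(((lam + m + (‖φ x‖ ^ 2 + ‖χ x‖ ^ 2) ^ (1 / (p - 1)) : ℝ)) : ℂ) * χ x)
    (hode' : ∀ x, deriv χ x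
        = (((lam - m + (‖φ x‖ ^ 2 + ‖χ x‖ ^ 2) ^ (1 / (p - 1)) : ℝ)) : ℂ) * φ x) :
    (∀ x y : ℝ,
      m * (‖χ x‖ ^ 2 - ‖φ x‖ ^ 2) + lam * (‖χ x‖ ^ 2 + ‖φ x‖ ^ 2)
          + (p - 1) / p * (‖χ x‖ ^ 2 + ‖φ x‖ ^ 2) ^ (p / (p - 1))
        = m * (‖χ y‖ ^ 2 - ‖φ y‖ ^ 2) + lam * (‖χ y‖ ^ 2 + ‖φ y‖ ^ 2)
          + (p - 1) / p * (‖χ y‖ ^ 2 + ‖φ y‖ ^ 2) ^ (p / (p - 1))) ∧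
    (∀ x y : ℝ,
      (starRingEnd ℂ) (χ x) * φ x - (starRingEnd ℂ) (φ x) * χ x
        = (starRingEnd ℂ) (χ y) * φ y - (starRingEnd ℂ) (φ y) * χ y) := by
  have hφ' (x : ℝ) :
      HasDerivAt φ (-(lam + m + (‖φ x‖ ^ 2 + ‖χ x‖ ^ 2) ^ (1 / (p - 1))) • χ x) x := by
    rw [real_smul, ofReal_neg, ← hode x]
    exact (hφ x).hasDerivAt
  have hχ' (x : ℝ) :
      HasDerivAt χ ((lam - m + (‖φ x‖ ^ 2 + ‖χ x‖ ^ 2) ^ (1 / (p - 1))) • φ x) x := by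
    rw [real_smul, ← hode' x]
    exact (hχ x).hasDerivAt
  exact ⟨eq_of_forall_hasDerivAt_zero fun x =>
      hasDerivAt_diracHamiltonian (hasDerivAt_rpow_primitive hp) (hφ' x) (hχ' x),
    eq_of_forall_hasDerivAt_zero fun x => hasDerivAt_diracCharge (hφ' x) (hχ' x)⟩

/-- **Conservation laws for the one-dimensional nonlinear Dirac system.**
Along any differentiable solution `(φ, χ)`, the quantities
`H = m(|χ|²−|φ|²) + λ(|χ|²+|φ|²) + ((p−1)/p)(|χ|²+|φ|²)^{p/(p−1)}` and
`G = conj(χ)φ − conj(φ)χ` are constant. -/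
theorem oneDim_nonlinear_dirac_conserved
    (m lam p : ℝ) (hm : 0 < m) (hp : 1 < p)
    (φ χ : ℝ → ℂ)
    (hφ : Differentiable ℝ φ) (hχ : Differentiable ℝ χ)
    (hode : ∀ x, deriv φ x
        = -(((lam + m + (‖φ x‖ ^ 2 + ‖χ x‖ ^ 2) ^ (1 / (p - 1)) : ℝ)) : ℂ) * χ x)
    (hode' : ∀ x, deriv χ x
        = (((lam - m + (‖φ x‖ ^ 2 + ‖χ x‖ ^ 2) ^ (1 / (p - 1)) : ℝ)) : ℂ) * φ x) :
    (∀ x y : ℝ,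
      m * (‖χ x‖ ^ 2 - ‖φ x‖ ^ 2) + lam * (‖χ x‖ ^ 2 + ‖φ x‖ ^ 2)
          + (p - 1) / p * (‖χ x‖ ^ 2 + ‖φ x‖ ^ 2) ^ (p / (p - 1))
        = m * (‖χ y‖ ^ 2 - ‖φ y‖ ^ 2) + lam * (‖χ y‖ ^ 2 + ‖φ y‖ ^ 2)
          + (p - 1) / p * (‖χ y‖ ^ 2 + ‖φ y‖ ^ 2) ^ (p / (p - 1))) ∧
    (∀ x y : ℝ,
      (starRingEnd ℂ) (χ x) * φ x - (starRingEnd ℂ) (φ x) * χ x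
        = (starRingEnd ℂ) (χ y) * φ y - (starRingEnd ℂ) (φ y) * χ y) :=
  oneDim_nonlinear_dirac_conserved_general m lam p hp φ χ hφ hχ hode hode'
end

section
/- Let p > 1 and 0 ≤ δ < p − 1, and set μ := (p − 1 − δ)/2. Define on (0, ∞) the functions φ(r) = (pμ)^{(p−1)/2} μ / (μ² + r²)^{p/2}, χ(r) = (pμ)^{(p−1)/2} r / (μ² + r²)^{p/2}, and W(r) = pμ / (μ² + r²). Then for all r > 0: φ'(r) = −W(r) χ(r), χ'(r) + (δ/r) χ(r) = (W(r) − 2) φ(r), and W(r)^{p−1} = φ(r)² + χ(r)². -/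
/-!
With `ρ = μ² + r²` and `q = ρ^{p/2}`, both `φ = Aμ/q` and `χ = Ar/q` (where `A = (pμ)^{(p-1)/2}`)
have logarithmic derivatives read off from `q'/q = pr/ρ = W r/μ`, so the two differential equations
reduce to rational identities in `r`; the second one is where `2μ = p - 1 - δ` enters.
The amplitude identity is `A² = (pμ)^{p-1}` together with `q² = ρ · ρ^{p-1}`.
-/

open Real

theorem hasDerivAt_add_sq_rpow {b r : ℝ} (a : ℝ) (h : 0 < b + r ^ 2) :
    HasDerivAt (fun s => (b + s ^ 2) ^ a) (2 * a * r / (b + r ^ 2) * (b + r ^ 2) ^ a) r := by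
  have hbase : HasDerivAt (fun s => b + s ^ 2) (2 * r) r := by
    simpa using (hasDerivAt_pow 2 r).const_add b
  convert hbase.rpow_const (p := a) (Or.inl h.ne') using 1
  rw [rpow_sub_one h.ne']
  field_simp

theorem hasDerivAt_div_add_sq_rpow {b r : ℝ} (c a : ℝ) (h : 0 < b + r ^ 2) :
    HasDerivAt (fun s => c / (b + s ^ 2) ^ a)
      (-(2 * a * r / (b + r ^ 2)) * (c / (b + r ^ 2) ^ a)) r := by
  have hq : (b + r ^ 2) ^ a ≠ 0 := (rpow_pos_of_pos h a).ne'
  refine ((hasDerivAt_const r c).div (hasDerivAt_add_sq_rpow a h) hq).congr_deriv ?_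
  field_simp
  ring

theorem hasDerivAt_mul_div_add_sq_rpow {b r : ℝ} (c a : ℝ) (h : 0 < b + r ^ 2) :
    HasDerivAt (fun s => c * s / (b + s ^ 2) ^ a)
      ((1 - 2 * a * r ^ 2 / (b + r ^ 2)) * (c / (b + r ^ 2) ^ a)) r := by
  have hq : (b + r ^ 2) ^ a ≠ 0 := (rpow_pos_of_pos h a).ne'
  refine (((hasDerivAt_id r).const_mul c).div (hasDerivAt_add_sq_rpow a h) hq).congr_deriv ?_
  simp only [id]
  field_simp

theorem div_rpow_sub_one_eq {c ρ : ℝ} (p : ℝ) (hc : 0 ≤ c) (hρ : 0 < ρ) :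
    (c / ρ) ^ (p - 1) = (c ^ ((p - 1) / 2)) ^ 2 * ρ / ((ρ ^ (p / 2)) ^ 2) := by
  have half_sq : ∀ {x : ℝ}, 0 ≤ x → ∀ a : ℝ, (x ^ (a / 2)) ^ 2 = x ^ a := fun hx a => by
    rw [← rpow_mul_natCast hx]
    norm_num
  rw [half_sq hc, half_sq hρ.le, div_rpow hc hρ.le, rpow_sub_one hρ.ne']
  field_simp

theorem radial_explicit_solution_general
    (p δ : ℝ) (hp : 1 < p) (hδ : δ < p - 1)
    (μ : ℝ) (hμ : μ = (p - 1 - δ) / 2)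
    (φ χ W : ℝ → ℝ)
    (hφ : ∀ r, φ r = (p * μ) ^ ((p - 1) / 2) * μ / (μ ^ 2 + r ^ 2) ^ (p / 2))
    (hχ : ∀ r, χ r = (p * μ) ^ ((p - 1) / 2) * r / (μ ^ 2 + r ^ 2) ^ (p / 2))
    (hW : ∀ r, W r = p * μ / (μ ^ 2 + r ^ 2)) :
    ∀ r : ℝ, 0 < r →
      deriv φ r = -W r * χ r ∧
      deriv χ r + δ / r * χ r = (W r - 2) * φ r ∧
      W r ^ (p - 1) = φ r ^ 2 + χ r ^ 2 := by
  intro r hr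
  have hpμ : 0 < p * μ := mul_pos (by linarith) (by rw [hμ]; linarith)
  have hρ : 0 < μ ^ 2 + r ^ 2 := by positivity
  set A := (p * μ) ^ ((p - 1) / 2)
  have hφ' := (hasDerivAt_div_add_sq_rpow (A * μ) (p / 2) hρ).deriv
  have hχ' := (hasDerivAt_mul_div_add_sq_rpow A (p / 2) hρ).deriv
  rw [← funext hφ] at hφ'
  rw [← funext hχ] at hχ'
  refine ⟨?_, ?_, ?_⟩
  · rw [hφ', hW, hχ]
    field_simp
  · rw [hχ', hW, hφ, hχ, hμ]
    field_simp
    ring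
  · rw [hW, hφ, hχ, div_rpow_sub_one_eq p hpμ.le hρ]
    ring

/-- **The explicit solution of the radial nonlinear Dirac system at the lower
end of the gap** (`m = 1`, `λ = −1`): with `μ = (p−1−δ)/2`,
`φ(r) = (pμ)^{(p−1)/2} μ/(μ²+r²)^{p/2}`, `χ(r) = (pμ)^{(p−1)/2} r/(μ²+r²)^{p/2}`
and `W(r) = pμ/(μ²+r²)` solve `φ' = −Wχ`, `χ' + (δ/r)χ = (W−2)φ`,
`W^{p−1} = φ² + χ²` on `(0, ∞)`. -/
theorem radial_explicit_solution
    (p δ : ℝ) (hp : 1 < p) (hδ₀ : 0 ≤ δ) (hδ : δ < p - 1)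
    (μ : ℝ) (hμ : μ = (p - 1 - δ) / 2)
    (φ χ W : ℝ → ℝ)
    (hφ : ∀ r, φ r = (p * μ) ^ ((p - 1) / 2) * μ / (μ ^ 2 + r ^ 2) ^ (p / 2))
    (hχ : ∀ r, χ r = (p * μ) ^ ((p - 1) / 2) * r / (μ ^ 2 + r ^ 2) ^ (p / 2))
    (hW : ∀ r, W r = p * μ / (μ ^ 2 + r ^ 2)) :
    ∀ r : ℝ, 0 < r →
      deriv φ r = -W r * χ r ∧
      deriv χ r + δ / r * χ r = (W r - 2) * φ r ∧
      W r ^ (p - 1) = φ r ^ 2 + χ r ^ 2 :=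
  radial_explicit_solution_general p δ hp hδ μ hμ φ χ W hφ hχ hW
end
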